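/- arXiv:2604.11567 — 2 statements merged into one kernel-verified Lean document; each statement's English description precedes it below -/
import Mathlib

section
/- Let A be a complete DFA with states Q_A, let ≈ be a precongruence on Q_A, and let E be the subset-expansion NFA whose states are the subsets P ⊆ Q_A of pairwise ≈-compatible states, with initial states those subsets containing q₀, and with a transition (P, σ, P') whenever p ·_A σ ∈ P' for all p ∈ P. Then every deterministic subautomaton of E (i.e., a deterministic complete automaton whose states, initial state, and transitions are among those of E) is finer than ≈: if two words lead the subautomaton to the same state, then they are ≈-equivalent. -/
/-- Action of a word on a state of a complete DFA with transition function δ. -/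
def dfaAct {Q A : Type*} (δ : Q → A → Q) (q : Q) (w : List A) : Q :=
  w.foldl δ q

/-- A set of states is pairwise compatible for a relation `approx`. -/
def PairwiseCompat {Q : Type*} (approx : Q → Q → Prop) (P : Set Q) : Prop :=
  ∀ p ∈ P, ∀ q ∈ P, approx p q

/-- Every deterministic (complete) subautomaton of the subset expansion of a DFA
relative to a precongruence `≈` is finer than `≈`: its states are pairwise
`≈`-compatible subsets, its initial state contains `q₀`, its transitions are
transitions of the expansion; then words leading to the same state are
`≈`-equivalent. -/
theorem subset_expansion_subautomaton_finer {Q A : Type*}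
    (q₀ : Q) (δ : Q → A → Q) (approx : Q → Q → Prop)
    (hrefl : ∀ q, approx q q)
    (hsymm : ∀ p q, approx p q → approx q p)
    (hcompat : ∀ p q σ, approx p q → approx (δ p σ) (δ q σ))
    -- a deterministic subautomaton of the subset expansion E:
    (B₀ : Set Q) (δB : Set Q → A → Set Q)
    (hB₀state : PairwiseCompat approx B₀)
    (hB₀init : q₀ ∈ B₀)
    (hδBstate : ∀ P : Set Q, ∀ σ : A, PairwiseCompat approx P →
      PairwiseCompat approx (δB P σ))
    (hδBtrans : ∀ P : Set Q, ∀ σ : A, PairwiseCompat approx P →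
      ∀ p ∈ P, δ p σ ∈ δB P σ) :
    ∀ u v : List A, dfaAct δB B₀ u = dfaAct δB B₀ v →
      approx (dfaAct δ q₀ u) (dfaAct δ q₀ v) := by
  have key : ∀ w : List A, ∀ (P : Set Q) (q : Q), PairwiseCompat approx P → q ∈ P →
      PairwiseCompat approx (dfaAct δB P w) ∧ dfaAct δ q w ∈ dfaAct δB P w := by
    intro w
    induction w with
    | nil => intro P q hP hq; exact ⟨hP, hq⟩
    | cons σ w ih =>
      intro P q hP hq
      exact ih (δB P σ) (δ q σ) (hδBstate P σ hP) (hδBtrans P σ hP q hq)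
  intro u v h
  obtain ⟨hPu, hu⟩ := key u B₀ q₀ hB₀state hB₀init
  obtain ⟨_, hv⟩ := key v B₀ q₀ hB₀state hB₀init
  rw [h] at hu hPu
  exact hPu _ hu _ hv
end

section
/- Let S be an appending streaming string transducer with states Q, registers X, initial state q₀, initial valuation v₀, transition function δˢ, register update function δʳ, and output function γ, and suppose S has a fixed output register X_out and independent flows. Define the codeterministic automaton R on state set X with transition σ ·_R X = Y whenever δʳ(q,σ)(X) = Y·w for some (equivalently, all) q. Then for every input word w = a₁⋯aₙ with run (qᵢ, vᵢ) of S, and every register X, the final value satisfies vₙ(X) = v₀(w ·_R X) · ω(q₀, w, X), where ω(q, σ, X) is the word appended in the update δʳ(q,σ)(X) = (σ ·_R X)·ω(q,σ,X), extended to words by the bimachine identity ω(q, uv, X) = ω(q, u, v ·_R X)·ω(q ·_L u, v, X). -/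
/-- Action of a word on a state of the underlying deterministic automaton. -/
def actQ {Q A : Type*} (δs : Q → A → Q) (q : Q) (w : List A) : Q :=
  w.foldl δs q

/-- Right action of words on registers given by the flow automaton. -/
def actR {X A : Type*} (δR : A → X → X) (w : List A) (x : X) : X :=
  w.foldr δR x

/-- Extension of the word-output of register updates to input words, via the
bimachine identity ω(q, uv, X) = ω(q, u, v ·_R X) · ω(q ·_L u, v, X). -/
def bigOmega {Q X A Γ : Type*} (δs : Q → A → Q) (δR : A → X → X)
    (ω : Q → A → X → List Γ) (q : Q) : List A → X → List Γ
  | [], _ => []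
  | a :: w, x => ω q a (actR δR w x) ++ bigOmega δs δR ω (δs q a) w x

/-- One step of register valuations: vᵢ = vᵢ₋₁ ∘ δʳ(qᵢ₋₁, aᵢ), where the update
δʳ(q,a)(X) = Y·w is encoded as `δr q a x = (Y, w)`. -/
def valRun {Q X A Γ : Type*} (δs : Q → A → Q) (δr : Q → A → X → X × List Γ)
    (v : X → List Γ) (q : Q) : List A → (X → List Γ)
  | [] => v
  | a :: w => valRun δs δr (fun x => v (δr q a x).1 ++ (δr q a x).2) (δs q a) w

/-- For an appending SST with a fixed output register and independent flows,
the final value of every register X after reading w satisfies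
vₙ(X) = v₀(w ·_R X) · ω(q₀, w, X), where ·_R is the action of the flow
automaton and ω collects the appended words. -/
theorem asst_independent_flows_register_value {Q X A Γ : Type*}
    (q₀ : Q) (v₀ : X → List Γ) (δs : Q → A → Q) (δr : Q → A → X → X × List Γ)
    (γ : Q → Option (X × List Γ)) (Xout : X)
    -- fixed output register:
    (hfixed : ∀ q e, γ q = some e → e.1 = Xout)
    -- independent flows, described by the flow automaton δR:
    (δR : A → X → X)
    (hflow : ∀ (q : Q) (a : A) (x : X), (δr q a x).1 = δR a x) :
    ∀ (w : List A) (x : X),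
      valRun δs δr v₀ q₀ w x =
        v₀ (actR δR w x) ++
          bigOmega δs δR (fun q a x => (δr q a x).2) q₀ w x := by
  intro w
  induction w generalizing q₀ v₀ with
  | nil => intro x; simp [valRun, actR, bigOmega]
  | cons a w ih =>
    intro x
    simp only [valRun, bigOmega, actR, List.foldr]
    rw [ih]
    simp [hflow, actR, List.append_assoc]
end
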